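/- If λ ≠ ±1 is an eigenvalue of the Coxeter transformation C of a graph with nonnegative definite Tits form B, then |λ| = 1. -/

import Mathlib

open Polynomial Matrix

noncomputable section
open scoped Classical

/-- The (generalized) Cartan matrix of a simply-laced graph `G`:
`2` on the diagonal, `-1` for adjacent vertices, `0` otherwise. -/
def cartanOf (R : Type*) [CommRing R] {V : Type*} (G : SimpleGraph V) : Matrix V V R :=
  fun i j => if i = j then 2 else if G.Adj i j then -1 else 0

/-- The matrix of the simple reflection `σ_i(x) = x - φ_i(x) α_i` associated to the
`i`-th row of a generalized Cartan matrix `K`. -/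
def reflOf (R : Type*) [CommRing R] {V : Type*} (K : Matrix V V R) (i : V) : Matrix V V R :=
  fun j k => (if j = k then 1 else 0) - (if j = i then K i k else 0)

/-- The Coxeter transformation associated to the generalized Cartan matrix `K`:
the product of all simple reflections taken in the order given by the list `L`. -/
def coxeterOf (R : Type*) [CommRing R] {V : Type*} [Fintype V] [DecidableEq V]
    (K : Matrix V V R) (L : List V) : Matrix V V R :=
  (L.map (reflOf R K)).prod

/-- `L` is an enumeration of the (finite) vertex set: each vertex occurs exactly once. -/
def IsEnum {V : Type*} (L : List V) : Prop := L.Nodup ∧ ∀ v, v ∈ L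

end

/-! Every simple reflection is an isometry of the Tits form `B`, hence so is the Coxeter
transformation `C`, also for the Hermitian extension of `B` to `ℂⁿ`. For an eigenvector `C v = λ v`
this gives `|λ|² B(v) = B(v)`. If `B(v) ≠ 0` then `|λ| = 1`; otherwise `v` lies in the kernel of the
positive semidefinite `B`, hence in that of `K = T B`, so every reflection fixes `v` and `λ = 1`. -/

section Reflections
variable {R : Type*} [CommRing R] {V : Type*} [DecidableEq V]

theorem reflOf_eq_one_sub_vecMulVec (K : Matrix V V R) (i : V) :
    reflOf R K i = 1 - vecMulVec (Pi.single i 1) (K i) := by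
  ext j k
  simp only [reflOf, Matrix.sub_apply, one_apply, vecMulVec_apply, Pi.single_apply, ite_mul,
    one_mul, zero_mul]
  congr

theorem reflOf_map {S : Type*} [CommRing S] (f : R →+* S) (K : Matrix V V R) (i : V) :
    (reflOf R K i).map f = reflOf S (K.map f) i := by
  ext j k
  simp only [map_apply, reflOf, map_sub, apply_ite f, map_one, map_zero]
  congr

variable [Fintype V]

theorem reflOf_mulVec_of_mulVec_eq_zero {K : Matrix V V R} {x : V → R} (hx : K *ᵥ x = 0)
    (i : V) : reflOf R K i *ᵥ x = x := by
  have hKix : K i ⬝ᵥ x = 0 := congrFun hx i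
  simp [reflOf_eq_one_sub_vecMulVec, sub_mulVec, vecMulVec_mulVec, hKix]

theorem reflOf_transpose_mul_mul_self {B : Matrix V V R} (hB : B.IsSymm) {d : V → R} {i : V}
    (hi : d i * B i i = 2) :
    (reflOf R (diagonal d * B) i)ᵀ * B * reflOf R (diagonal d * B) i = B := by
  have hrow : (diagonal d * B) i = d i • B i := by ext k; simp [diagonal_mul]
  have hcol : B *ᵥ Pi.single i 1 = B i := by ext k; simp [mulVec_single, ← hB.apply i k]
  rw [reflOf_eq_one_sub_vecMulVec, hrow]
  simp only [transpose_sub, transpose_one, transpose_vecMulVec, sub_mul, mul_sub, one_mul, mul_one,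
    vecMulVec_mul, mul_vecMulVec, hcol, single_vecMul]
  ext j k
  simp only [one_smul, smul_vecMulVec, vecMulVec_smul, mulVec_single, MulOpposite.op_one,
    Matrix.sub_apply, Matrix.smul_apply, vecMulVec_apply, row_apply, smul_eq_mul, col_apply]
  linear_combination (d i * B i j * B i k) * hi

end Reflections

section Coxeter
variable {R : Type*} [CommRing R] {V : Type*} [Fintype V] [DecidableEq V]

theorem coxeterOf_cons (K : Matrix V V R) (i : V) (L : List V) :
    coxeterOf R K (i :: L) = reflOf R K i * coxeterOf R K L := by
  simp [coxeterOf]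

theorem coxeterOf_map {S : Type*} [CommRing S] (f : R →+* S) (K : Matrix V V R) (L : List V) :
    (coxeterOf R K L).map f = coxeterOf S (K.map f) L := by
  induction L with
  | nil => exact Matrix.map_one f (map_zero f) (map_one f)
  | cons i L ih => rw [coxeterOf_cons, coxeterOf_cons, Matrix.map_mul, ih, reflOf_map]

theorem coxeterOf_mulVec_of_mulVec_eq_zero {K : Matrix V V R} {x : V → R} (hx : K *ᵥ x = 0)
    (L : List V) : coxeterOf R K L *ᵥ x = x := by
  induction L with
  | nil => simp [coxeterOf]
  | cons i L ih => rw [coxeterOf_cons, ← mulVec_mulVec, ih, reflOf_mulVec_of_mulVec_eq_zero hx]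

theorem coxeterOf_transpose_mul_mul_self {B : Matrix V V R} (hB : B.IsSymm) {d : V → R}
    (hd : ∀ i, d i * B i i = 2) (L : List V) :
    (coxeterOf R (diagonal d * B) L)ᵀ * B * coxeterOf R (diagonal d * B) L = B := by
  induction L with
  | nil => simp [coxeterOf]
  | cons i L ih =>
    set C := coxeterOf R (diagonal d * B) L
    set σ := reflOf R (diagonal d * B) i
    calc (σ * C)ᵀ * B * (σ * C) = Cᵀ * (σᵀ * B * σ) * C := by
          simp only [transpose_mul, Matrix.mul_assoc]
      _ = B := by rw [reflOf_transpose_mul_mul_self hB (hd i), ih]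

end Coxeter

section
variable {V : Type*} [Fintype V]

theorem star_mul_self_mul_dotProduct_mulVec_of_conjTranspose_mul_mul_self {R : Type*}
    [CommRing R] [StarRing R] {A M : Matrix V V R} (hA : Aᴴ * M * A = M) {l : R} {v : V → R}
    (hv : A *ᵥ v = l • v) : star l * l * (star v ⬝ᵥ M *ᵥ v) = star v ⬝ᵥ M *ᵥ v :=
  calc star l * l * (star v ⬝ᵥ M *ᵥ v) = star (A *ᵥ v) ⬝ᵥ M *ᵥ (A *ᵥ v) := by
        rw [hv, star_smul, mulVec_smul, smul_dotProduct, dotProduct_smul, smul_eq_mul, smul_eq_mul,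
          mul_assoc]
    _ = star v ⬝ᵥ (Aᴴ * M * A) *ᵥ v := by
        rw [star_mulVec, ← dotProduct_mulVec, mulVec_mulVec, mulVec_mulVec]
    _ = star v ⬝ᵥ M *ᵥ v := by rw [hA]

theorem exists_mulVec_eq_smul_of_isRoot_charpoly {K : Type*} [Field K] [DecidableEq V]
    {A : Matrix V V K} {l : K} (hl : A.charpoly.IsRoot l) : ∃ v ≠ 0, A *ᵥ v = l • v := by
  rw [← charpoly_toLin', ← Module.End.hasEigenvalue_iff_isRoot_charpoly] at hl
  obtain ⟨v, hv⟩ := hl.exists_hasEigenvector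
  exact ⟨v, hv.2, by simpa using hv.apply_eq_smul⟩

open scoped MatrixOrder ComplexOrder in
theorem Matrix.PosSemidef.map_ofReal {B : Matrix V V ℝ} (hB : B.PosSemidef) :
    (B.map ((↑) : ℝ → ℂ)).PosSemidef := by
  classical
  obtain ⟨X, rfl⟩ := CStarAlgebra.nonneg_iff_eq_star_mul_self.mp hB.nonneg
  change ((Xᴴ * X).map Complex.ofRealHom).PosSemidef
  rw [Matrix.map_mul, conjTranspose_map]
  · exact posSemidef_conjTranspose_mul_self _
  · intro t; simp

end

theorem norm_eq_one_of_isRoot_charpoly_coxeterOf {V : Type*} [Fintype V] [DecidableEq V]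
    {B : Matrix V V ℝ} (hB : B.PosSemidef) {d : V → ℝ} (hd : ∀ i, d i * B i i = 2) (L : List V)
    {l : ℂ} (hl : (coxeterOf ℂ ((diagonal d * B).map Complex.ofRealHom) L).charpoly.IsRoot l) :
    ‖l‖ = 1 := by
  set Bc := B.map Complex.ofRealHom
  set C := coxeterOf ℝ (diagonal d * B) L
  have hCB : (C.map Complex.ofRealHom)ᴴ * Bc * C.map Complex.ofRealHom = Bc := by
    rw [← conjTranspose_map _ (fun _ => by simp), conjTranspose_eq_transpose_of_trivial,
      ← Matrix.map_mul, ← Matrix.map_mul, coxeterOf_transpose_mul_mul_self (isHermitian_iff_isSymm.1 hB.1) hd]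
  obtain ⟨v, hv0, hv⟩ := exists_mulVec_eq_smul_of_isRoot_charpoly hl
  rw [← coxeterOf_map] at hv
  have hquad := star_mul_self_mul_dotProduct_mulVec_of_conjTranspose_mul_mul_self hCB hv
  by_cases hiso : star v ⬝ᵥ Bc *ᵥ v = 0
  · have hBv : Bc *ᵥ v = 0 := (hB.map_ofReal.dotProduct_mulVec_zero_iff v).1 hiso
    have hKv : (diagonal d * B).map Complex.ofRealHom *ᵥ v = 0 := by
      rw [Matrix.map_mul, ← mulVec_mulVec, hBv, mulVec_zero]
    have hfix : l • v = (1 : ℂ) • v := by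
      rw [← hv, coxeterOf_map, coxeterOf_mulVec_of_mulVec_eq_zero hKv, one_smul]
    have hl1 : l = 1 := (smul_left_inj hv0).1 hfix
    rw [hl1, norm_one]
  · have hnormSq : star l * l = 1 := mul_right_cancel₀ hiso (by rw [hquad, one_mul])
    rw [Complex.star_def, Complex.conj_mul'] at hnormSq
    exact (pow_eq_one_iff_of_nonneg (norm_nonneg l) two_ne_zero).1 (by exact_mod_cast hnormSq)

theorem eigenvalue_on_unit_circle_general (n : ℕ)
    (K T B : Matrix (Fin n) (Fin n) ℝ)
    (hdiag : ∀ i, K i i = 2)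
    (hT : ∀ i j, i ≠ j → T i j = 0)
    (hsymm : B.IsSymm) (hK : K = T * B)
    (hnonneg : ∀ x : Fin n → ℝ, 0 ≤ x ⬝ᵥ B.mulVec x)
    (L : List (Fin n))
    (l : ℂ)
    (hl : (coxeterOf ℂ (K.map (fun t => (t : ℂ))) L).charpoly.IsRoot l) :
    ‖l‖ = 1 := by
  have hKd : K = diagonal T.diag * B := by rw [hK, (isDiag_iff_diagonal_diag T).1 hT]
  have hB : B.PosSemidef :=
    .of_dotProduct_mulVec_nonneg (isHermitian_iff_isSymm.2 hsymm) (by simpa using hnonneg)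
  have hd : ∀ i, T.diag i * B i i = 2 := fun i => by simpa [hKd, diagonal_mul] using hdiag i
  rw [hKd] at hl
  exact norm_eq_one_of_isRoot_charpoly_coxeterOf hB hd L hl

/-- If `λ ≠ ±1` is an eigenvalue of the Coxeter transformation of a graph whose
(symmetrized) Tits form `B` is nonnegative definite, then `|λ| = 1`.

Here `K = T·B` is a symmetrizable generalized Cartan matrix (diagonal entries `2`,
off-diagonal entries nonpositive integers, `k_{ij} = 0 ↔ k_{ji} = 0`), `T` is a diagonal
matrix with positive entries, `B` is symmetric and positive semidefinite, and the Coxeter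
transformation is the product of all simple reflections of `K` in any order. -/
theorem eigenvalue_on_unit_circle (n : ℕ)
    (K T B : Matrix (Fin n) (Fin n) ℝ)
    (hdiag : ∀ i, K i i = 2)
    (hoffdiag : ∀ i j, i ≠ j → ∃ m : ℕ, K i j = -(m : ℝ))
    (hzero : ∀ i j, K i j = 0 ↔ K j i = 0)
    (hT : ∀ i j, i ≠ j → T i j = 0) (hTpos : ∀ i, 0 < T i i)
    (hsymm : B.IsSymm) (hK : K = T * B)
    (hnonneg : ∀ x : Fin n → ℝ, 0 ≤ x ⬝ᵥ B.mulVec x)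
    (L : List (Fin n)) (hL : IsEnum L)
    (l : ℂ)
    (hl : (coxeterOf ℂ (K.map (fun t => (t : ℂ))) L).charpoly.IsRoot l)
    (h1 : l ≠ 1) (h2 : l ≠ -1) :
    ‖l‖ = 1 :=
  eigenvalue_on_unit_circle_general n K T B hdiag hT hsymm hK hnonneg L l hl
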